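/- Let k be a field and C a k-coalgebra. Define coHH₀(C) as the kernel of Δ − τ∘Δ: C → C ⊗ C, where τ swaps tensor factors. Then for c ∈ C, the element c lies in coHH₀(C) if and only if (f * g)(c) = (g * f)(c) for all f, g ∈ C*, where * is the convolution product. Consequently there is a well-defined surjective k-linear map HH₀(C*) = C*/[C*, C*] → (coHH₀(C))* induced by evaluation. -/

import Mathlib

/-!
Pairing with `f ⊗ g` turns `(f * g)(c)` into `⟨f ⊗ g, Δ c⟩` and `(g * f)(c)` into
`⟨f ⊗ g, τ (Δ c)⟩`. Over a field the functionals `f ⊗ g` separate the points of `C ⊗ C`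
(coordinates of a tensor basis are of this form), so `c` is cocommutative exactly when all
convolution products commute at `c`. Restricting functionals to `coHH₀(C)` therefore kills
`[C*, C*]`, and it is surjective because the dual of an injective linear map between vector
spaces is surjective.
-/

open TensorProduct

variable {k C : Type*}

/-- The convolution product on the linear dual of a coalgebra. -/
noncomputable def conv [Field k] [AddCommGroup C] [Module k C] [Coalgebra k C]
    (f g : Module.Dual k C) : Module.Dual k C :=
  (LinearMap.mul' k k) ∘ₗ (TensorProduct.map f g) ∘ₗ (Coalgebra.comul (R := k) (A := C))

/-- `coHH₀(C) = ker(Δ − τ∘Δ)`, the subspace of cocommuting elements. -/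
noncomputable def coHH0 (k C : Type*) [Field k] [AddCommGroup C] [Module k C]
    [Coalgebra k C] : Submodule k C :=
  LinearMap.ker ((Coalgebra.comul (R := k) (A := C)) -
    (TensorProduct.comm k C C).toLinearMap ∘ₗ (Coalgebra.comul (R := k) (A := C)))

/-- The commutator subspace `[C*, C*]` of the convolution algebra. -/
noncomputable def commutatorSub (k C : Type*) [Field k] [AddCommGroup C] [Module k C]
    [Coalgebra k C] : Submodule k (Module.Dual k C) :=
  Submodule.span k {x | ∃ f g : Module.Dual k C, x = conv f g - conv g f}

namespace Module.Basis

variable {R M N ι κ : Type*} [CommSemiring R] [AddCommMonoid M] [AddCommMonoid N]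
  [Module R M] [Module R N]

theorem tensorProduct_coord (b : Basis ι R M) (c : Basis κ R N) (i : ι) (j : κ) :
    (b.tensorProduct c).coord (i, j) = dualDistrib R M N (b.coord i ⊗ₜ c.coord j) := by
  ext m n
  simp [mul_comm]

end Module.Basis

namespace TensorProduct

theorem eq_zero_of_forall_dualDistrib_eq_zero {R M N : Type*} [CommSemiring R] [AddCommMonoid M]
    [AddCommMonoid N] [Module R M] [Module R N] [Module.Free R M] [Module.Free R N]
    {x : M ⊗[R] N} (h : ∀ (f : Module.Dual R M) (g : Module.Dual R N),
      dualDistrib R M N (f ⊗ₜ g) x = 0) : x = 0 := by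
  let b := (Module.Free.chooseBasis R M).tensorProduct (Module.Free.chooseBasis R N)
  refine b.forall_coord_eq_zero_iff.mp fun ⟨i, j⟩ => ?_
  rw [Module.Basis.tensorProduct_coord]
  exact h _ _

end TensorProduct

section Cocommutative

variable [Field k] [AddCommGroup C] [Module k C] [Coalgebra k C]

open Coalgebra

theorem conv_apply (f g : Module.Dual k C) (c : C) :
    conv f g c = dualDistrib k C C (f ⊗ₜ g) (comul c) :=
  rfl

theorem mem_coHH0_iff {c : C} :
    c ∈ coHH0 k C ↔ comul c = TensorProduct.comm k C C (comul c) := by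
  simp [coHH0, sub_eq_zero]

theorem mem_coHH0_iff_forall_conv_apply_comm (c : C) :
    c ∈ coHH0 k C ↔ ∀ f g : Module.Dual k C, conv f g c = conv g f c := by
  have conv_apply_swap (f g : Module.Dual k C) :
      conv f g c = dualDistrib k C C (g ⊗ₜ f) (TensorProduct.comm k C C (comul c)) := by
    rw [dualDistrib_apply_comm, TensorProduct.comm_tmul, conv_apply]
  rw [mem_coHH0_iff]
  constructor
  · intro h f g
    rw [conv_apply_swap, ← h, conv_apply]
  · intro h
    rw [← sub_eq_zero]
    refine eq_zero_of_forall_dualDistrib_eq_zero fun g f => ?_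
    rw [map_sub, ← conv_apply, ← conv_apply_swap, h, sub_self]

theorem commutatorSub_le_ker_dualMap_subtype :
    commutatorSub k C ≤ LinearMap.ker (coHH0 k C).subtype.dualMap := by
  rw [commutatorSub, Submodule.span_le]
  rintro _ ⟨f, g, rfl⟩
  ext ⟨c, hc⟩
  simp [(mem_coHH0_iff_forall_conv_apply_comm c).mp hc f g]

end Cocommutative

/-- For a coalgebra `C` over a field `k`: `c ∈ coHH₀(C)` iff all convolution
products commute at `c`; consequently evaluation induces a well-defined surjective linear map
`HH₀(C*) = C*/[C*,C*] → (coHH₀(C))*`. -/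
theorem coHH0_iff_and_HH0_surjects (k C : Type*) [Field k] [AddCommGroup C] [Module k C]
    [Coalgebra k C] :
    (∀ c : C, c ∈ coHH0 k C ↔ ∀ f g : Module.Dual k C, conv f g c = conv g f c) ∧
    ∃ π : (Module.Dual k C ⧸ commutatorSub k C) →ₗ[k] Module.Dual k ↥(coHH0 k C),
      Function.Surjective π ∧
      ∀ (f : Module.Dual k C) (c : ↥(coHH0 k C)),
        π (Submodule.Quotient.mk f) c = f (c : C) := by
  refine ⟨mem_coHH0_iff_forall_conv_apply_comm,
    (commutatorSub k C).liftQ _ commutatorSub_le_ker_dualMap_subtype,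
    fun φ => ?_, fun _ _ => rfl⟩
  obtain ⟨f, rfl⟩ :=
    LinearMap.dualMap_surjective_of_injective (coHH0 k C).injective_subtype φ
  exact ⟨Submodule.Quotient.mk f, rfl⟩
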